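/- arXiv:0903.5400 — 8 statements merged into one kernel-verified Lean document; each statement's English description precedes it below -/
import Mathlib

section
/- Let D ⊆ ℝ², let p be an interior point of D, and let f : D → ℝ have continuous partial derivatives of first and second order in an open neighborhood of p. If ∇f(p) = 0 and the Hessian form Q_p of f at p is indefinite, then f has a strict saddle point at p. -/
open Set Filter Topology

/-- `γ : [a, b] → D` is a regular path in `D`: it is continuous on `[a, b]`, maps `[a, b]`
into `D`, is differentiable on `(a, b)`, and its derivative is nonvanishing on `(a, b)`. -/
def IsRegularPath (D : Set (ℝ × ℝ)) (γ : ℝ → ℝ × ℝ) (a b : ℝ) : Prop :=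
  a < b ∧ ContinuousOn γ (Set.Icc a b) ∧ Set.MapsTo γ (Set.Icc a b) D ∧
    ∀ t ∈ Set.Ioo a b, DifferentiableAt ℝ γ t ∧ deriv γ t ≠ 0

/-- A function of one real variable has a strict local maximum at `t`. -/
def IsStrictLocalMax (g : ℝ → ℝ) (t : ℝ) : Prop :=
  ∀ᶠ s in 𝓝[≠] t, g s < g t

/-- A function of one real variable has a strict local minimum at `t`. -/
def IsStrictLocalMin (g : ℝ → ℝ) (t : ℝ) : Prop :=
  ∀ᶠ s in 𝓝[≠] t, g t < g s

/-- `f` has a saddle point at `p`: there are regular paths `γ₁, γ₂` in `D` passing through `p`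
and intersecting transversally at `p` (their tangent vectors at `p` are not multiples of each
other) such that `f` has a local maximum at `p` along `γ₁` and a local minimum at `p`
along `γ₂`. -/
def HasSaddleAt (D : Set (ℝ × ℝ)) (f : ℝ × ℝ → ℝ) (p : ℝ × ℝ) : Prop :=
  ∃ (a₁ b₁ a₂ b₂ t₁ t₂ : ℝ) (γ₁ γ₂ : ℝ → ℝ × ℝ),
    IsRegularPath D γ₁ a₁ b₁ ∧ IsRegularPath D γ₂ a₂ b₂ ∧
    t₁ ∈ Set.Ioo a₁ b₁ ∧ t₂ ∈ Set.Ioo a₂ b₂ ∧ γ₁ t₁ = p ∧ γ₂ t₂ = p ∧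
    (∀ c : ℝ, deriv γ₁ t₁ ≠ c • deriv γ₂ t₂) ∧
    (∀ c : ℝ, deriv γ₂ t₂ ≠ c • deriv γ₁ t₁) ∧
    IsLocalMax (f ∘ γ₁) t₁ ∧ IsLocalMin (f ∘ γ₂) t₂

/-- `f` has a strict saddle point at `p`: as for a saddle point, but with a strict local
maximum along `γ₁` and a strict local minimum along `γ₂`. -/
def HasStrictSaddleAt (D : Set (ℝ × ℝ)) (f : ℝ × ℝ → ℝ) (p : ℝ × ℝ) : Prop :=
  ∃ (a₁ b₁ a₂ b₂ t₁ t₂ : ℝ) (γ₁ γ₂ : ℝ → ℝ × ℝ),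
    IsRegularPath D γ₁ a₁ b₁ ∧ IsRegularPath D γ₂ a₂ b₂ ∧
    t₁ ∈ Set.Ioo a₁ b₁ ∧ t₂ ∈ Set.Ioo a₂ b₂ ∧ γ₁ t₁ = p ∧ γ₂ t₂ = p ∧
    (∀ c : ℝ, deriv γ₁ t₁ ≠ c • deriv γ₂ t₂) ∧
    (∀ c : ℝ, deriv γ₂ t₂ ≠ c • deriv γ₁ t₁) ∧
    IsStrictLocalMax (f ∘ γ₁) t₁ ∧ IsStrictLocalMin (f ∘ γ₂) t₂

/-- The second partial derivative `f_xx` at `p`. -/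
noncomputable def fxx (f : ℝ × ℝ → ℝ) (p : ℝ × ℝ) : ℝ :=
  fderiv ℝ (fun q => fderiv ℝ f q (1, 0)) p (1, 0)

/-- The mixed second partial derivative `f_xy` at `p`. -/
noncomputable def fxy (f : ℝ × ℝ → ℝ) (p : ℝ × ℝ) : ℝ :=
  fderiv ℝ (fun q => fderiv ℝ f q (1, 0)) p (0, 1)

/-- The second partial derivative `f_yy` at `p`. -/
noncomputable def fyy (f : ℝ × ℝ → ℝ) (p : ℝ × ℝ) : ℝ :=
  fderiv ℝ (fun q => fderiv ℝ f q (0, 1)) p (0, 1)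

/-- The Hessian form `Q_p(h) = f_xx(p) h₁² + 2 f_xy(p) h₁ h₂ + f_yy(p) h₂²` of `f` at `p`. -/
noncomputable def hessianForm (f : ℝ × ℝ → ℝ) (p h : ℝ × ℝ) : ℝ :=
  fxx f p * h.1 ^ 2 + 2 * fxy f p * h.1 * h.2 + fyy f p * h.2 ^ 2

/-!
Along a line `t ↦ p + t • w` the function `g t = f (p + t • w)` has `g' 0 = Df(p) w = 0` and
`g'' 0 = Q_p(w)`. If `Q_p(w) > 0`, then near `0` the derivative `g'` has the sign of `t`, so `g`
strictly decreases up to `0` and strictly increases after it: a strict local minimum. Likewise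
`Q_p(w) < 0` gives a strict local maximum. Lines in directions `u`, `v` with
`Q_p(u) > 0 > Q_p(v)` are transversal, because `Q_p(c • u) = c² Q_p(u)` has the sign of `Q_p(u)`.
-/

section StrictSecondDerivativeTest

variable {g g' : ℝ → ℝ} {x₀ c : ℝ}

lemma eventually_nhdsGT_lt_of_hasDerivAt_pos (hcont : ContinuousAt g x₀)
    (hg : ∀ᶠ t in 𝓝[>] x₀, HasDerivAt g (g' t) t ∧ 0 < g' t) :
    ∀ᶠ t in 𝓝[>] x₀, g x₀ < g t := by
  obtain ⟨b, hb, hsub⟩ := mem_nhdsGT_iff_exists_Ioo_subset.1 hg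
  have hcontOn : ContinuousOn g (Ico x₀ b) := fun t ht => by
    rcases eq_or_lt_of_le ht.1 with rfl | h
    · exact hcont.continuousWithinAt
    · exact (hsub ⟨h, ht.2⟩).1.continuousAt.continuousWithinAt
  have hmono : StrictMonoOn g (Ico x₀ b) := by
    refine strictMonoOn_of_hasDerivWithinAt_pos (f' := g') (convex_Ico x₀ b) hcontOn ?_ ?_ <;>
      rw [interior_Ico]
    exacts [fun t ht => (hsub ht).1.hasDerivWithinAt, fun t ht => (hsub ht).2]
  filter_upwards [Ioo_mem_nhdsGT hb] with t ht
  exact hmono (left_mem_Ico.2 hb) ⟨ht.1.le, ht.2⟩ ht.1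

lemma eventually_nhdsLT_lt_of_hasDerivAt_neg (hcont : ContinuousAt g x₀)
    (hg : ∀ᶠ t in 𝓝[<] x₀, HasDerivAt g (g' t) t ∧ g' t < 0) :
    ∀ᶠ t in 𝓝[<] x₀, g x₀ < g t := by
  obtain ⟨a, ha, hsub⟩ := mem_nhdsLT_iff_exists_Ioo_subset.1 hg
  have hcontOn : ContinuousOn g (Ioc a x₀) := fun t ht => by
    rcases eq_or_lt_of_le ht.2 with rfl | h
    · exact hcont.continuousWithinAt
    · exact (hsub ⟨ht.1, h⟩).1.continuousAt.continuousWithinAt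
  have hanti : StrictAntiOn g (Ioc a x₀) := by
    refine strictAntiOn_of_hasDerivWithinAt_neg (f' := g') (convex_Ioc a x₀) hcontOn ?_ ?_ <;>
      rw [interior_Ioc]
    exacts [fun t ht => (hsub ht).1.hasDerivWithinAt, fun t ht => (hsub ht).2]
  filter_upwards [Ioo_mem_nhdsLT ha] with t ht
  exact hanti ⟨ht.1, ht.2.le⟩ (right_mem_Ioc.2 ha) ht.2

theorem isStrictLocalMin_of_hasDerivAt_deriv_pos
    (hg : ∀ᶠ t in 𝓝 x₀, HasDerivAt g (g' t) t) (hg'₀ : g' x₀ = 0)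
    (hg' : HasDerivAt g' c x₀) (hc : 0 < c) : IsStrictLocalMin g x₀ := by
  have hslope : ∀ᶠ t in 𝓝[≠] x₀, 0 < slope g' x₀ t :=
    (hasDerivAt_iff_tendsto_slope.1 hg').eventually (lt_mem_nhds hc)
  have hcont : ContinuousAt g x₀ := hg.self_of_nhds.continuousAt
  rw [IsStrictLocalMin, ← nhdsLT_sup_nhdsGT, eventually_sup]
  constructor
  · refine eventually_nhdsLT_lt_of_hasDerivAt_neg (g' := g') hcont ?_
    filter_upwards [nhdsWithin_le_nhds hg, nhdsLT_le_nhdsNE x₀ hslope, self_mem_nhdsWithin]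
      with t hderiv hpos (ht : t < x₀)
    exact ⟨hderiv, neg_of_slope_pos ht hpos hg'₀⟩
  · refine eventually_nhdsGT_lt_of_hasDerivAt_pos (g' := g') hcont ?_
    filter_upwards [nhdsWithin_le_nhds hg, nhdsGT_le_nhdsNE x₀ hslope, self_mem_nhdsWithin]
      with t hderiv hpos (ht : x₀ < t)
    exact ⟨hderiv, pos_of_slope_pos ht hpos hg'₀⟩

theorem isStrictLocalMax_of_hasDerivAt_deriv_neg
    (hg : ∀ᶠ t in 𝓝 x₀, HasDerivAt g (g' t) t) (hg'₀ : g' x₀ = 0)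
    (hg' : HasDerivAt g' c x₀) (hc : c < 0) : IsStrictLocalMax g x₀ := by
  have hmin : IsStrictLocalMin (-g) x₀ :=
    isStrictLocalMin_of_hasDerivAt_deriv_pos (hg.mono fun t ht => ht.neg) (by simp [hg'₀])
      hg'.neg (neg_pos.2 hc)
  exact Filter.Eventually.mono hmin fun t ht => by simpa using ht

end StrictSecondDerivativeTest

section Lines

variable {E : Type*} [NormedAddCommGroup E] [NormedSpace ℝ E] {f : E → ℝ} {p w : E}

lemma hasDerivAt_line (t : ℝ) : HasDerivAt (fun s : ℝ => p + s • w) w t := by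
  simpa using ((hasDerivAt_id t).smul_const w).const_add p

lemma tendsto_line : Tendsto (fun t : ℝ => p + t • w) (𝓝 0) (𝓝 p) := by
  simpa using (hasDerivAt_line (p := p) (w := w) 0).continuousAt.tendsto

lemma eventually_hasDerivAt_comp_line (hf : ∀ᶠ y in 𝓝 p, DifferentiableAt ℝ f y) :
    ∀ᶠ t in 𝓝 (0 : ℝ),
      HasDerivAt (fun s : ℝ => f (p + s • w)) (fderiv ℝ f (p + t • w) w) t := by
  filter_upwards [tendsto_line.eventually hf] with t ht
  exact ht.hasFDerivAt.comp_hasDerivAt t (hasDerivAt_line t)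

lemma hasDerivAt_fderiv_comp_line (hf : DifferentiableAt ℝ (fderiv ℝ f) p) :
    HasDerivAt (fun t : ℝ => fderiv ℝ f (p + t • w) w) (fderiv ℝ (fderiv ℝ f) p w w) 0 := by
  have hf' : HasFDerivAt (fderiv ℝ f) (fderiv ℝ (fderiv ℝ f) p) (p + (0 : ℝ) • w) := by
    simpa using hf.hasFDerivAt
  exact (ContinuousLinearMap.apply ℝ ℝ w).hasFDerivAt.comp_hasDerivAt 0
    (hf'.comp_hasDerivAt 0 (hasDerivAt_line 0))

theorem isStrictLocalMin_comp_line (hf : ∀ᶠ y in 𝓝 p, DifferentiableAt ℝ f y)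
    (hf' : DifferentiableAt ℝ (fderiv ℝ f) p) (hgrad : fderiv ℝ f p = 0)
    (hw : 0 < fderiv ℝ (fderiv ℝ f) p w w) :
    IsStrictLocalMin (fun t : ℝ => f (p + t • w)) 0 :=
  isStrictLocalMin_of_hasDerivAt_deriv_pos (eventually_hasDerivAt_comp_line hf)
    (by simp [hgrad]) (hasDerivAt_fderiv_comp_line hf') hw

theorem isStrictLocalMax_comp_line (hf : ∀ᶠ y in 𝓝 p, DifferentiableAt ℝ f y)
    (hf' : DifferentiableAt ℝ (fderiv ℝ f) p) (hgrad : fderiv ℝ f p = 0)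
    (hw : fderiv ℝ (fderiv ℝ f) p w w < 0) :
    IsStrictLocalMax (fun t : ℝ => f (p + t • w)) 0 :=
  isStrictLocalMax_of_hasDerivAt_deriv_neg (eventually_hasDerivAt_comp_line hf)
    (by simp [hgrad]) (hasDerivAt_fderiv_comp_line hf') hw

end Lines

lemma exists_isRegularPath_line {D : Set (ℝ × ℝ)} {p w : ℝ × ℝ} (hD : D ∈ 𝓝 p) (hw : w ≠ 0) :
    ∃ δ > 0, IsRegularPath D (fun t : ℝ => p + t • w) (-δ) δ := by
  obtain ⟨δ, hδ, hmem⟩ := Metric.nhds_basis_closedBall.eventually_iff.1 (tendsto_line.eventually hD)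
  rw [Real.closedBall_eq_Icc, zero_sub, zero_add] at hmem
  refine ⟨δ, hδ, by linarith, by fun_prop, fun t ht => hmem ht, fun t _ => ?_⟩
  exact ⟨(hasDerivAt_line t).differentiableAt, (hasDerivAt_line (p := p) t).deriv ▸ hw⟩

lemma hessianForm_smul (f : ℝ × ℝ → ℝ) (p w : ℝ × ℝ) (c : ℝ) :
    hessianForm f p (c • w) = c ^ 2 * hessianForm f p w := by
  simp only [hessianForm, Prod.smul_fst, Prod.smul_snd, smul_eq_mul]
  ring

lemma ne_smul_of_hessianForm_mul_neg {f : ℝ × ℝ → ℝ} {p u v : ℝ × ℝ}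
    (h : hessianForm f p u * hessianForm f p v < 0) (c : ℝ) : v ≠ c • u := by
  rintro rfl
  rw [hessianForm_smul, mul_left_comm, ← sq] at h
  exact h.not_ge (by positivity)

lemma hessianForm_eq_fderiv_fderiv {f : ℝ × ℝ → ℝ} {p : ℝ × ℝ} (hf : ContDiffAt ℝ 2 f p)
    (w : ℝ × ℝ) : hessianForm f p w = fderiv ℝ (fderiv ℝ f) p w w := by
  set B := fderiv ℝ (fderiv ℝ f) p
  have hB : HasFDerivAt (fderiv ℝ f) B p :=
    ((hf.fderiv_right (m := 1) le_rfl).differentiableAt one_ne_zero).hasFDerivAt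
  have hpartial (e : ℝ × ℝ) :
      fderiv ℝ (fun q => fderiv ℝ f q e) p = (ContinuousLinearMap.apply ℝ ℝ e).comp B :=
    ((ContinuousLinearMap.apply ℝ ℝ e).hasFDerivAt.comp p hB).fderiv
  have hsymm : B (1, 0) (0, 1) = B (0, 1) (1, 0) := hf.isSymmSndFDerivAt (by simp) _ _
  obtain ⟨a, b⟩ := w
  have hw : ((a, b) : ℝ × ℝ) = a • (1, 0) + b • (0, 1) := by ext <;> simp
  rw [hessianForm, fxx, fxy, fyy, hpartial, hpartial, hw]
  simp only [map_add, map_smul, add_apply, smul_apply, smul_eq_mul, hsymm,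
    ContinuousLinearMap.comp_apply, ContinuousLinearMap.apply_apply, Prod.fst_add, Prod.snd_add,
    Prod.smul_fst, Prod.smul_snd, mul_one, mul_zero, add_zero, zero_add]
  ring

theorem indefinite_hessian_implies_strict_saddle_general (D U : Set (ℝ × ℝ)) (p : ℝ × ℝ)
    (f : ℝ × ℝ → ℝ) (hp : p ∈ interior D) (hU : IsOpen U) (hpU : p ∈ U)
    (hf : ContDiffOn ℝ 2 f U) (hgrad : fderiv ℝ f p = 0)
    (hindef : ∃ u v : ℝ × ℝ, 0 < hessianForm f p u ∧ hessianForm f p v < 0) :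
    HasStrictSaddleAt D f p := by
  obtain ⟨u, v, hu, hv⟩ := hindef
  have hfp : ContDiffAt ℝ 2 f p := hf.contDiffAt (hU.mem_nhds hpU)
  have hdiff : ∀ᶠ y in 𝓝 p, DifferentiableAt ℝ f y :=
    (hf.differentiableOn two_ne_zero).eventually_differentiableAt (hU.mem_nhds hpU)
  have hdiff' : DifferentiableAt ℝ (fderiv ℝ f) p :=
    (hfp.fderiv_right (m := 1) le_rfl).differentiableAt one_ne_zero
  have hmax := isStrictLocalMax_comp_line hdiff hdiff' hgrad
    (hessianForm_eq_fderiv_fderiv hfp v ▸ hv)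
  have hmin := isStrictLocalMin_comp_line hdiff hdiff' hgrad
    (hessianForm_eq_fderiv_fderiv hfp u ▸ hu)
  have hopp : hessianForm f p u * hessianForm f p v < 0 := mul_neg_of_pos_of_neg hu hv
  have hu₀ : u ≠ 0 := by rintro rfl; simp [hessianForm] at hu
  have hv₀ : v ≠ 0 := by rintro rfl; simp [hessianForm] at hv
  obtain ⟨δ₁, hδ₁, hγ₁⟩ := exists_isRegularPath_line (mem_interior_iff_mem_nhds.1 hp) hv₀
  obtain ⟨δ₂, hδ₂, hγ₂⟩ := exists_isRegularPath_line (mem_interior_iff_mem_nhds.1 hp) hu₀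
  refine ⟨-δ₁, δ₁, -δ₂, δ₂, 0, 0, _, _, hγ₁, hγ₂, ⟨neg_neg_of_pos hδ₁, hδ₁⟩,
    ⟨neg_neg_of_pos hδ₂, hδ₂⟩, by simp, by simp, fun c => ?_, fun c => ?_, hmax, hmin⟩ <;>
    rw [(hasDerivAt_line 0).deriv, (hasDerivAt_line 0).deriv]
  · exact ne_smul_of_hessianForm_mul_neg hopp c
  · exact ne_smul_of_hessianForm_mul_neg (mul_comm (hessianForm f p u) _ ▸ hopp) c

/-- If `f` has continuous first and second order partial derivatives on an open
neighborhood `U ⊆ D` of the interior point `p`, `∇f(p) = 0`, and the Hessian form of `f`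
at `p` is indefinite, then `f` has a strict saddle point at `p`. -/
theorem indefinite_hessian_implies_strict_saddle (D U : Set (ℝ × ℝ)) (p : ℝ × ℝ)
    (f : ℝ × ℝ → ℝ) (hp : p ∈ interior D) (hU : IsOpen U) (hpU : p ∈ U) (hUD : U ⊆ D)
    (hf : ContDiffOn ℝ 2 f U) (hgrad : fderiv ℝ f p = 0)
    (hindef : ∃ u v : ℝ × ℝ, 0 < hessianForm f p u ∧ hessianForm f p v < 0) :
    HasStrictSaddleAt D f p :=
  indefinite_hessian_implies_strict_saddle_general D U p f hp hU hpU hf hgrad hindef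
end

section
/- Let D ⊆ ℝ², let p be an interior point of D, and let f : D → ℝ be differentiable at p. If f has a strict saddle point at p, then f is a saddle point in the classical sense: ∇f(p) = 0 and f has neither a local maximum nor a local minimum at p. -/
open Set Filter Topology

/-!
Along each path the one-variable function `f ∘ γᵢ` has a local extremum at `tᵢ`, so the chain
rule gives `Df(p) (γᵢ'(tᵢ)) = 0`; the two tangent vectors are transversal, hence span `ℝ²`, and
`Df(p) = 0`. A path stays in `D` near `tᵢ`, so the strict minimum along `γ₂` produces points of `D`
arbitrarily close to `p` where `f > f p`, and the strict maximum along `γ₁` points where `f < f p`.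
-/

theorem IsStrictLocalMax.isLocalMax {g : ℝ → ℝ} {t : ℝ} (h : IsStrictLocalMax g t) :
    IsLocalMax g t := by
  filter_upwards [eventually_nhdsWithin_iff.mp h] with s hs
  rcases eq_or_ne s t with rfl | hst
  · exact le_rfl
  · exact (hs hst).le

theorem IsStrictLocalMin.isLocalMin {g : ℝ → ℝ} {t : ℝ} (h : IsStrictLocalMin g t) :
    IsLocalMin g t := by
  filter_upwards [eventually_nhdsWithin_iff.mp h] with s hs
  rcases eq_or_ne s t with rfl | hst
  · exact le_rfl
  · exact (hs hst).le

theorem IsRegularPath.tendsto_nhdsWithin {D : Set (ℝ × ℝ)} {γ : ℝ → ℝ × ℝ} {a b t : ℝ}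
    (hγ : IsRegularPath D γ a b) (ht : t ∈ Ioo a b) : Tendsto γ (𝓝 t) (𝓝[D] (γ t)) := by
  have hIcc : Icc a b ∈ 𝓝 t := Icc_mem_nhds ht.1 ht.2
  exact tendsto_nhdsWithin_iff.mpr
    ⟨(hγ.2.1.continuousAt hIcc).tendsto, eventually_of_mem hIcc fun _ hs ↦ hγ.2.2.1 hs⟩

theorem IsStrictLocalMin.not_isLocalMaxOn_of_tendsto {E : Type*} [TopologicalSpace E]
    {f : E → ℝ} {D : Set E} {γ : ℝ → E} {t : ℝ} (hγ : Tendsto γ (𝓝 t) (𝓝[D] (γ t)))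
    (h : IsStrictLocalMin (f ∘ γ) t) : ¬ IsLocalMaxOn f D (γ t) := fun hmax ↦
  have hle : ∀ᶠ s in 𝓝[≠] t, f (γ s) ≤ f (γ t) := nhdsWithin_le_nhds (hγ.eventually hmax)
  let ⟨_, hle, hlt⟩ := (hle.and h).exists
  hle.not_gt hlt

theorem IsStrictLocalMax.not_isLocalMinOn_of_tendsto {E : Type*} [TopologicalSpace E]
    {f : E → ℝ} {D : Set E} {γ : ℝ → E} {t : ℝ} (hγ : Tendsto γ (𝓝 t) (𝓝[D] (γ t)))
    (h : IsStrictLocalMax (f ∘ γ) t) : ¬ IsLocalMinOn f D (γ t) := fun hmin ↦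
  have hle : ∀ᶠ s in 𝓝[≠] t, f (γ t) ≤ f (γ s) := nhdsWithin_le_nhds (hγ.eventually hmin)
  let ⟨_, hle, hlt⟩ := (hle.and h).exists
  hle.not_gt hlt

theorem IsLocalExtr.fderiv_apply_deriv_eq_zero {E : Type*} [NormedAddCommGroup E]
    [NormedSpace ℝ E] {f : E → ℝ} {γ : ℝ → E} {t : ℝ} (hf : DifferentiableAt ℝ f (γ t))
    (hγ : DifferentiableAt ℝ γ t) (h : IsLocalExtr (f ∘ γ) t) :
    fderiv ℝ f (γ t) (deriv γ t) = 0 := by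
  rw [← fderiv_comp_deriv t hf hγ, h.deriv_eq_zero]

theorem ContinuousLinearMap.eq_zero_of_map_eq_zero_of_linearIndependent_pair {K V W : Type*}
    [DivisionRing K] [AddCommGroup V] [Module K V] [TopologicalSpace V] [AddCommGroup W]
    [Module K W] [TopologicalSpace W] {ℓ : V →L[K] W} {u v : V}
    (huv : LinearIndependent K ![u, v]) (hdim : Module.finrank K V = 2)
    (hu : ℓ u = 0) (hv : ℓ v = 0) : ℓ = 0 := by
  have hspan := huv.span_eq_top_of_card_eq_finrank (by simp [hdim])
  refine ContinuousLinearMap.coe_injective (LinearMap.ext_on_range hspan fun i ↦ ?_)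
  fin_cases i <;> simpa

/-- If `f : D → ℝ` is differentiable at the interior point `p` and has a strict saddle point
at `p`, then `p` is a saddle point in the classical sense: `∇f(p) = 0` and `f` has neither a
local maximum nor a local minimum at `p`. -/
theorem strict_saddle_implies_classical_saddle (D : Set (ℝ × ℝ)) (p : ℝ × ℝ)
    (f : ℝ × ℝ → ℝ) (hp : p ∈ interior D) (hf : DifferentiableWithinAt ℝ f D p)
    (hsad : HasStrictSaddleAt D f p) :
    fderivWithin ℝ f D p = 0 ∧ ¬ IsLocalMaxOn f D p ∧ ¬ IsLocalMinOn f D p := by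
  obtain ⟨a₁, b₁, a₂, b₂, t₁, t₂, γ₁, γ₂, hγ₁, hγ₂, ht₁, ht₂, rfl, hp₂, htr₁, htr₂, hmax, hmin⟩ :=
    hsad
  have hD : D ∈ 𝓝 (γ₁ t₁) := mem_interior_iff_mem_nhds.mp hp
  have hf' : DifferentiableAt ℝ f (γ₁ t₁) := hf.differentiableAt hD
  have h₁ := IsLocalExtr.fderiv_apply_deriv_eq_zero hf' (hγ₁.2.2.2 t₁ ht₁).1
    hmax.isLocalMax.isExtr
  have h₂ := IsLocalExtr.fderiv_apply_deriv_eq_zero (hp₂ ▸ hf') (hγ₂.2.2.2 t₂ ht₂).1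
    hmin.isLocalMin.isExtr
  have hindep : LinearIndependent ℝ ![deriv γ₁ t₁, deriv γ₂ t₂] :=
    linearIndependent_fin2.mpr ⟨by simpa using htr₂ 0, fun c h ↦ htr₁ c h.symm⟩
  refine ⟨?_, hp₂ ▸ hmin.not_isLocalMaxOn_of_tendsto (hγ₂.tendsto_nhdsWithin ht₂),
    hmax.not_isLocalMinOn_of_tendsto (hγ₁.tendsto_nhdsWithin ht₁)⟩
  rw [fderivWithin_of_mem_nhds hD]
  exact ContinuousLinearMap.eq_zero_of_map_eq_zero_of_linearIndependent_pair hindep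
    (by simp) h₁ (hp₂ ▸ h₂)
end

section
/- (Monkey saddle) The function f : ℝ² → ℝ defined by f(x,y) := x³ − 3xy² has a strict saddle point at (0,0). -/
/-!
Since `f = x (x - √3 y) (x + √3 y)` vanishes on three lines, perturb two of them into graphs
over the `y`-axis: along `x = y²` one gets `f = y⁴ (y² - 3)`, negative for small `y ≠ 0`, and
along `x = √3 y + y²` one gets `f = y⁴ (√3 + y) (2√3 + y)`, positive for small `y ≠ 0`.
Their tangents `(0, 1)` and `(√3, 1)` at the origin are transversal.
-/

open Set Filter Topology

theorem isStrictLocalMin_sub_pow_mul {h : ℝ → ℝ} {t₀ : ℝ} {n : ℕ} (hn : Even n) (hn0 : n ≠ 0)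
    (hh : ContinuousAt h t₀) (hpos : 0 < h t₀) :
    IsStrictLocalMin (fun s => (s - t₀) ^ n * h s) t₀ := by
  filter_upwards [nhdsWithin_le_nhds (hh.eventually (lt_mem_nhds hpos)), self_mem_nhdsWithin]
    with s hs hne
  have hpow : 0 < (s - t₀) ^ n := hn.pow_pos (sub_ne_zero.2 hne)
  simp only [sub_self, zero_pow hn0, zero_mul]
  positivity

theorem isStrictLocalMax_sub_pow_mul {h : ℝ → ℝ} {t₀ : ℝ} {n : ℕ} (hn : Even n) (hn0 : n ≠ 0)
    (hh : ContinuousAt h t₀) (hneg : h t₀ < 0) :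
    IsStrictLocalMax (fun s => (s - t₀) ^ n * h s) t₀ := by
  filter_upwards [isStrictLocalMin_sub_pow_mul hn hn0 hh.neg (neg_pos.2 hneg)] with s hs
  simpa only [Pi.neg_apply, mul_neg, neg_lt_neg_iff] using hs

theorem hasDerivAt_graph {u : ℝ → ℝ} {u' t : ℝ} (hu : HasDerivAt u u' t) :
    HasDerivAt (fun s => (u s, s)) (u', 1) t :=
  hu.prodMk (hasDerivAt_id t)

theorem isRegularPath_graph {u : ℝ → ℝ} (hu : Differentiable ℝ u) {a b : ℝ} (hab : a < b) :
    IsRegularPath univ (fun s => (u s, s)) a b := by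
  refine ⟨hab, (hu.continuous.prodMk continuous_id).continuousOn, mapsTo_univ _ _,
    fun t _ => ⟨(hu t).prodMk differentiableAt_id, ?_⟩⟩
  simp [(hasDerivAt_graph (hu t).hasDerivAt).deriv]

theorem prod_one_ne_smul_prod_one {p q : ℝ} (hpq : p ≠ q) (c : ℝ) :
    ((p, 1) : ℝ × ℝ) ≠ c • (q, 1) := by
  intro h
  obtain ⟨hp, hc⟩ := Prod.ext_iff.1 h
  simp only [Prod.smul_mk, smul_eq_mul, mul_one] at hp hc
  exact hpq (by rw [hp, ← hc, one_mul])

theorem hasStrictSaddleAt_of_graphs {f : ℝ × ℝ → ℝ} {u₁ u₂ : ℝ → ℝ} {x t : ℝ}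
    (hu₁ : Differentiable ℝ u₁) (hu₂ : Differentiable ℝ u₂) (hx₁ : u₁ t = x) (hx₂ : u₂ t = x)
    (hslope : deriv u₁ t ≠ deriv u₂ t)
    (hmax : IsStrictLocalMax (fun s => f (u₁ s, s)) t)
    (hmin : IsStrictLocalMin (fun s => f (u₂ s, s)) t) :
    HasStrictSaddleAt univ f (x, t) := by
  have hd₁ := (hasDerivAt_graph (hu₁ t).hasDerivAt).deriv
  have hd₂ := (hasDerivAt_graph (hu₂ t).hasDerivAt).deriv
  refine ⟨t - 1, t + 1, t - 1, t + 1, t, t, _, _, isRegularPath_graph hu₁ (by linarith),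
    isRegularPath_graph hu₂ (by linarith), ⟨by linarith, by linarith⟩, ⟨by linarith, by linarith⟩,
    by rw [hx₁], by rw [hx₂], ?_, ?_, hmax, hmin⟩
  · rw [hd₁, hd₂]; exact prod_one_ne_smul_prod_one hslope
  · rw [hd₁, hd₂]; exact prod_one_ne_smul_prod_one hslope.symm

/-- Monkey saddle: `f(x, y) = x³ - 3xy²` has a strict saddle point at the origin. -/
theorem monkey_saddle :
    HasStrictSaddleAt Set.univ
      (fun q : ℝ × ℝ => q.1 ^ 3 - 3 * q.1 * q.2 ^ 2) (0, 0) := by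
  have h3 : √3 ^ 2 = 3 := Real.sq_sqrt (by norm_num)
  refine hasStrictSaddleAt_of_graphs (u₁ := fun s => s ^ 2) (u₂ := fun s => √3 * s + s ^ 2)
    (by fun_prop) (by fun_prop) (by simp) (by simp) ?_ ?_ ?_
  · rw [deriv_fun_add (by fun_prop) (by fun_prop)]
    simp [(Real.sqrt_pos.2 three_pos).ne]
  · convert isStrictLocalMax_sub_pow_mul (h := fun s => s ^ 2 - 3) (t₀ := 0) (n := 4)
      (by decide) (by norm_num) (by fun_prop) (by norm_num) using 2 with s
    ring
  · convert isStrictLocalMin_sub_pow_mul (h := fun s => (√3 + s) * (2 * √3 + s)) (t₀ := 0)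
      (n := 4) (by decide) (by norm_num) (by fun_prop) (by positivity) using 2 with s
    linear_combination (s ^ 3 * √3 + s ^ 4) * h3
end

section
/- (Dog saddle) The function f : ℝ² → ℝ defined by f(x,y) := x³y − xy³ has a strict saddle point at (0,0), and moreover the two witnessing paths can be chosen to be straight line segments; yet the Hessian form of f at (0,0) is identically zero, hence not indefinite. -/
open Set Filter Topology

/-- The dog saddle function `f(x, y) = x³y - xy³`. -/
def dogSaddle : ℝ × ℝ → ℝ := fun q => q.1 ^ 3 * q.2 - q.1 * q.2 ^ 3

noncomputable def dsL (q : ℝ × ℝ) : (ℝ × ℝ) →L[ℝ] ℝ :=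
  (3*q.1^2*q.2 - q.2^3) • (ContinuousLinearMap.fst ℝ ℝ ℝ) +
  (q.1^3 - 3*q.1*q.2^2) • (ContinuousLinearMap.snd ℝ ℝ ℝ)

theorem ds_hasFDerivAt (q : ℝ × ℝ) : HasFDerivAt dogSaddle (dsL q) q := by
  have h1 : HasFDerivAt (fun q : ℝ×ℝ => q.1) (ContinuousLinearMap.fst ℝ ℝ ℝ) q := hasFDerivAt_fst
  have h2 : HasFDerivAt (fun q : ℝ×ℝ => q.2) (ContinuousLinearMap.snd ℝ ℝ ℝ) q := hasFDerivAt_snd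
  have key := (((h1.mul h1).mul h1).mul h2).sub (h1.mul ((h2.mul h2).mul h2))
  have heq : dogSaddle = fun q : ℝ×ℝ => ((q.1*q.1)*q.1)*q.2 - q.1*((q.2*q.2)*q.2) := by
    funext q; simp [dogSaddle]; ring
  rw [heq]
  refine key.congr_fderiv ?_
  ext <;> simp [dsL] <;> ring

theorem ds_fx (q : ℝ × ℝ) : fderiv ℝ dogSaddle q (1, 0) = 3*q.1^2*q.2 - q.2^3 := by
  rw [(ds_hasFDerivAt q).fderiv]; simp [dsL]

theorem ds_fy (q : ℝ × ℝ) : fderiv ℝ dogSaddle q (0, 1) = q.1^3 - 3*q.1*q.2^2 := by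
  rw [(ds_hasFDerivAt q).fderiv]; simp [dsL]

theorem gx_hasFDerivAt0 :
    HasFDerivAt (fun q : ℝ×ℝ => 3*q.1^2*q.2 - q.2^3) (0 : (ℝ×ℝ) →L[ℝ] ℝ) (0, 0) := by
  have h1 : HasFDerivAt (fun q : ℝ×ℝ => q.1) (ContinuousLinearMap.fst ℝ ℝ ℝ) ((0:ℝ),(0:ℝ)) :=
    hasFDerivAt_fst
  have h2 : HasFDerivAt (fun q : ℝ×ℝ => q.2) (ContinuousLinearMap.snd ℝ ℝ ℝ) ((0:ℝ),(0:ℝ)) :=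
    hasFDerivAt_snd
  have key := (((h1.const_mul 3).mul h1).mul h2).sub ((h2.mul h2).mul h2)
  have heq : (fun q : ℝ×ℝ => 3*q.1^2*q.2 - q.2^3)
      = fun q : ℝ×ℝ => ((3*q.1)*q.1)*q.2 - (q.2*q.2)*q.2 := by
    funext q; ring
  rw [heq]
  refine key.congr_fderiv ?_
  ext <;> simp

theorem gy_hasFDerivAt0 :
    HasFDerivAt (fun q : ℝ×ℝ => q.1^3 - 3*q.1*q.2^2) (0 : (ℝ×ℝ) →L[ℝ] ℝ) (0, 0) := by
  have h1 : HasFDerivAt (fun q : ℝ×ℝ => q.1) (ContinuousLinearMap.fst ℝ ℝ ℝ) ((0:ℝ),(0:ℝ)) :=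
    hasFDerivAt_fst
  have h2 : HasFDerivAt (fun q : ℝ×ℝ => q.2) (ContinuousLinearMap.snd ℝ ℝ ℝ) ((0:ℝ),(0:ℝ)) :=
    hasFDerivAt_snd
  have key := ((h1.mul h1).mul h1).sub (((h1.const_mul 3).mul h2).mul h2)
  have heq : (fun q : ℝ×ℝ => q.1^3 - 3*q.1*q.2^2)
      = fun q : ℝ×ℝ => ((q.1*q.1)*q.1) - ((3*q.1)*q.2)*q.2 := by
    funext q; ring
  rw [heq]
  refine key.congr_fderiv ?_
  ext <;> simp

theorem line_deriv (v w : ℝ × ℝ) (t : ℝ) :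
    HasDerivAt (fun s : ℝ => v + s • w) w t := by
  have : HasDerivAt (fun s : ℝ => s • w) ((1:ℝ) • w) t :=
    (hasDerivAt_id t).smul_const w
  simpa using this.const_add v

theorem fxx0 : fxx dogSaddle (0,0) = 0 := by
  unfold fxx
  have : (fun q : ℝ×ℝ => fderiv ℝ dogSaddle q (1, 0)) = fun q : ℝ×ℝ => 3*q.1^2*q.2 - q.2^3 := by
    funext q; exact ds_fx q
  rw [this, gx_hasFDerivAt0.fderiv]; simp

theorem fxy0 : fxy dogSaddle (0,0) = 0 := by
  unfold fxy
  have : (fun q : ℝ×ℝ => fderiv ℝ dogSaddle q (1, 0)) = fun q : ℝ×ℝ => 3*q.1^2*q.2 - q.2^3 := by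
    funext q; exact ds_fx q
  rw [this, gx_hasFDerivAt0.fderiv]; simp

theorem fyy0 : fyy dogSaddle (0,0) = 0 := by
  unfold fyy
  have : (fun q : ℝ×ℝ => fderiv ℝ dogSaddle q (0, 1)) = fun q : ℝ×ℝ => q.1^3 - 3*q.1*q.2^2 := by
    funext q; exact ds_fy q
  rw [this, gy_hasFDerivAt0.fderiv]; simp

theorem hess0 (h : ℝ × ℝ) : hessianForm dogSaddle (0, 0) h = 0 := by
  unfold hessianForm
  rw [fxx0, fxy0, fyy0]
  ring

theorem line_regular (v w : ℝ × ℝ) (hw : w ≠ 0) :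
    IsRegularPath Set.univ (fun t => v + t • w) (-1) 1 := by
  refine ⟨by norm_num, ?_, fun _ _ => mem_univ _, fun t _ => ?_⟩
  · exact (continuous_const.add (continuous_id.smul continuous_const)).continuousOn
  · refine ⟨(line_deriv v w t).differentiableAt, ?_⟩
    rw [(line_deriv v w t).deriv]; exact hw

/-- Dog saddle: `f(x, y) = x³y - xy³` has a strict saddle point at the origin, witnessed by
two straight line segments, yet the Hessian form of `f` at the origin is identically zero,
hence not indefinite. -/
theorem dog_saddle :
    (∃ (a₁ b₁ a₂ b₂ t₁ t₂ : ℝ) (v₁ w₁ v₂ w₂ : ℝ × ℝ),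
      IsRegularPath Set.univ (fun t => v₁ + t • w₁) a₁ b₁ ∧
      IsRegularPath Set.univ (fun t => v₂ + t • w₂) a₂ b₂ ∧
      t₁ ∈ Set.Ioo a₁ b₁ ∧ t₂ ∈ Set.Ioo a₂ b₂ ∧
      v₁ + t₁ • w₁ = (0, 0) ∧ v₂ + t₂ • w₂ = (0, 0) ∧
      (∀ c : ℝ, deriv (fun t => v₁ + t • w₁) t₁ ≠ c • deriv (fun t => v₂ + t • w₂) t₂) ∧
      (∀ c : ℝ, deriv (fun t => v₂ + t • w₂) t₂ ≠ c • deriv (fun t => v₁ + t • w₁) t₁) ∧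
      IsStrictLocalMax (dogSaddle ∘ fun t => v₁ + t • w₁) t₁ ∧
      IsStrictLocalMin (dogSaddle ∘ fun t => v₂ + t • w₂) t₂) ∧
    (∀ h : ℝ × ℝ, hessianForm dogSaddle (0, 0) h = 0) ∧
    ¬ (∃ u v : ℝ × ℝ,
        0 < hessianForm dogSaddle (0, 0) u ∧ hessianForm dogSaddle (0, 0) v < 0) := by
  refine ⟨?_, hess0, ?_⟩
  · refine ⟨-1, 1, -1, 1, 0, 0, (0,0), (1,2), (0,0), (2,1),
      line_regular _ _ (by simp [Prod.ext_iff]),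
      line_regular _ _ (by simp [Prod.ext_iff]),
      by norm_num, by norm_num, by simp, by simp, ?_, ?_, ?_, ?_⟩
    · intro c
      rw [(line_deriv (0,0) ((1:ℝ),(2:ℝ)) 0).deriv, (line_deriv (0,0) ((2:ℝ),(1:ℝ)) 0).deriv]
      simp only [Prod.ext_iff, Prod.smul_mk, smul_eq_mul, ne_eq, not_and]
      intro h1; nlinarith [h1]
    · intro c
      rw [(line_deriv (0,0) ((1:ℝ),(2:ℝ)) 0).deriv, (line_deriv (0,0) ((2:ℝ),(1:ℝ)) 0).deriv]
      simp only [Prod.ext_iff, Prod.smul_mk, smul_eq_mul, ne_eq, not_and]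
      intro h1; nlinarith [h1]
    · filter_upwards [self_mem_nhdsWithin] with s hs
      have hs' : s ≠ 0 := hs
      have h4 : 0 < s^4 := by positivity
      simp only [Function.comp, dogSaddle, Prod.smul_mk, Prod.mk_add_mk, smul_eq_mul]
      norm_num
      nlinarith
    · filter_upwards [self_mem_nhdsWithin] with s hs
      have hs' : s ≠ 0 := hs
      have h4 : 0 < s^4 := by positivity
      simp only [Function.comp, dogSaddle, Prod.smul_mk, Prod.mk_add_mk, smul_eq_mul]
      norm_num
      nlinarith
  · rintro ⟨u, v, hu, -⟩
    rw [hess0] at hu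
    exact lt_irrefl 0 hu
end

section
/- Let m be an odd positive integer and define f : ℝ² → ℝ by f(x,y) := x^m. Then f does not have a saddle point at any point of ℝ². -/
open Set Filter Topology

/-- For an odd positive integer `m`, the function `f(x, y) = x^m` has no saddle point at
any point of `ℝ²`. -/
theorem odd_power_no_saddle (m : ℕ) (hm : Odd m) (hm0 : 0 < m) (p : ℝ × ℝ) :
    ¬ HasSaddleAt Set.univ (fun q : ℝ × ℝ => q.1 ^ m) p := by
  rintro ⟨a₁, b₁, a₂, b₂, t₁, t₂, γ₁, γ₂, hr₁, hr₂, ht₁, ht₂, hp₁, hp₂, htr, -, hmax, hmin⟩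
  have hmono : StrictMono fun x : ℝ => x ^ m := Odd.strictMono_pow hm
  have hd₁ := (hr₁.2.2.2 t₁ ht₁)
  have hd₂ := (hr₂.2.2.2 t₂ ht₂)
  -- local max of first coordinate of γ₁
  have hmax' : IsLocalMax (fun t => (γ₁ t).1) t₁ := by
    filter_upwards [hmax] with s hs
    exact hmono.le_iff_le.mp hs
  have hmin' : IsLocalMin (fun t => (γ₂ t).1) t₂ := by
    filter_upwards [hmin] with s hs
    exact hmono.le_iff_le.mp hs
  have hder₁ : HasDerivAt (fun t => (γ₁ t).1) (deriv γ₁ t₁).1 t₁ :=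
    (hd₁.1.hasDerivAt).fst
  have hder₂ : HasDerivAt (fun t => (γ₂ t).1) (deriv γ₂ t₂).1 t₂ :=
    (hd₂.1.hasDerivAt).fst
  have hz₁ : (deriv γ₁ t₁).1 = 0 := by
    have := hmax'.deriv_eq_zero
    rwa [hder₁.deriv] at this
  have hz₂ : (deriv γ₂ t₂).1 = 0 := by
    have := hmin'.deriv_eq_zero
    rwa [hder₂.deriv] at this
  have hy₂ : (deriv γ₂ t₂).2 ≠ 0 := by
    intro h
    exact hd₂.2 (Prod.ext hz₂ h)
  apply htr ((deriv γ₁ t₁).2 / (deriv γ₂ t₂).2)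
  apply Prod.ext
  · simp [hz₁, hz₂]
  · simp [Prod.smul_snd, div_mul_cancel₀ _ hy₂]
end

section
/- Let c₁, c₂ ∈ ℝ with 0 < c₁ < c₂ and define f : ℝ² → ℝ by f(x,y) := (y − c₁x²)(y − c₂x²). Then f has a strict saddle point at (0,0). -/
open Set Filter Topology

/-! The parabola `y = m x²` with `c₁ < m < c₂` runs between the two zero parabolas of `f`, where
`f` is negative: along it `f = (m - c₁)(m - c₂) x⁴`, with a strict maximum at the origin. Along
the `y`-axis `f = y²`, with a strict minimum there. The two curves cross transversally. -/

theorem isRegularPath_of_hasDerivAt {D : Set (ℝ × ℝ)} {γ γ' : ℝ → ℝ × ℝ} {a b : ℝ} (hab : a < b)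
    (hD : MapsTo γ (Icc a b) D) (hγ : ∀ t, HasDerivAt γ (γ' t) t) (hγ' : ∀ t, γ' t ≠ 0) :
    IsRegularPath D γ a b :=
  ⟨hab, fun t _ => (hγ t).continuousAt.continuousWithinAt, hD,
    fun t _ => ⟨(hγ t).differentiableAt, (hγ t).deriv ▸ hγ' t⟩⟩

theorem ne_smul_of_det_ne_zero {u v : ℝ × ℝ} (h : u.1 * v.2 - u.2 * v.1 ≠ 0) (c : ℝ) :
    u ≠ c • v := by
  rintro rfl
  apply h
  simp only [Prod.smul_fst, Prod.smul_snd, smul_eq_mul]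
  ring

theorem isStrictLocalMax_of_forall_ne {g : ℝ → ℝ} {t : ℝ} (h : ∀ s ≠ t, g s < g t) :
    IsStrictLocalMax g t :=
  eventually_nhdsWithin_of_forall h

theorem isStrictLocalMin_of_forall_ne {g : ℝ → ℝ} {t : ℝ} (h : ∀ s ≠ t, g t < g s) :
    IsStrictLocalMin g t :=
  eventually_nhdsWithin_of_forall h

def parabolaPath (m t : ℝ) : ℝ × ℝ := (t, m * t ^ 2)

theorem hasDerivAt_parabolaPath (m t : ℝ) : HasDerivAt (parabolaPath m) (1, 2 * m * t) t :=
  ((hasDerivAt_id t).prodMk ((hasDerivAt_pow 2 t).const_mul m)).congr_deriv (by simp; ring)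

theorem hasDerivAt_yAxis (t : ℝ) : HasDerivAt (fun s : ℝ => ((0 : ℝ), s)) (0, 1) t :=
  (hasDerivAt_const t 0).prodMk (hasDerivAt_id t)

theorem two_parabolas_strict_saddle_general (c₁ c₂ : ℝ) (h12 : c₁ < c₂) :
    HasStrictSaddleAt Set.univ
      (fun q : ℝ × ℝ => (q.2 - c₁ * q.1 ^ 2) * (q.2 - c₂ * q.1 ^ 2)) (0, 0) := by
  obtain ⟨m, hc₁m, hmc₂⟩ := exists_between h12
  have hm : (m - c₁) * (m - c₂) < 0 := mul_neg_of_pos_of_neg (sub_pos.2 hc₁m) (sub_neg.2 hmc₂)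
  have hD₁ : deriv (parabolaPath m) 0 = (1, 0) := by simpa using (hasDerivAt_parabolaPath m 0).deriv
  have hD₂ : deriv (fun s : ℝ => ((0 : ℝ), s)) 0 = (0, 1) := (hasDerivAt_yAxis 0).deriv
  refine ⟨-1, 1, -1, 1, 0, 0, parabolaPath m, fun s => (0, s),
    isRegularPath_of_hasDerivAt (by norm_num) (mapsTo_univ _ _) (hasDerivAt_parabolaPath m)
      (fun _ h => by simpa using congrArg Prod.fst h),
    isRegularPath_of_hasDerivAt (by norm_num) (mapsTo_univ _ _) hasDerivAt_yAxis
      (fun _ h => by simpa using congrArg Prod.snd h),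
    by norm_num, by norm_num, by simp [parabolaPath], rfl,
    ne_smul_of_det_ne_zero (by simp [hD₁, hD₂]), ne_smul_of_det_ne_zero (by simp [hD₁, hD₂]),
    isStrictLocalMax_of_forall_ne fun s hs => ?_, isStrictLocalMin_of_forall_ne fun s hs => ?_⟩
  · have hf : (m * s ^ 2 - c₁ * s ^ 2) * (m * s ^ 2 - c₂ * s ^ 2) =
        (m - c₁) * (m - c₂) * s ^ 4 := by ring
    simpa [parabolaPath, hf] using mul_neg_of_neg_of_pos hm (by positivity : 0 < s ^ 4)
  · simpa using hs

/-- For `0 < c₁ < c₂`, the function `f(x, y) = (y - c₁x²)(y - c₂x²)` has a strict saddle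
point at the origin. -/
theorem two_parabolas_strict_saddle (c₁ c₂ : ℝ) (h0 : 0 < c₁) (h12 : c₁ < c₂) :
    HasStrictSaddleAt Set.univ
      (fun q : ℝ × ℝ => (q.2 - c₁ * q.1 ^ 2) * (q.2 - c₂ * q.1 ^ 2)) (0, 0) :=
  two_parabolas_strict_saddle_general c₁ c₂ h12
end

section
/- Let m, n be positive integers and define f : ℝ² → ℝ by f(x,y) := x^m y^n. Then f has a strict saddle point at (0,0) if and only if both m and n are odd. -/
open Set Filter Topology

/-! If `m` and `n` are both even, then `f ≥ f (0, 0)`, so `f` has no strict maximum along any path.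
If exactly one exponent is odd, say `n`, then `f < 0` forces `y < 0` and `f > 0` forces `y > 0`;
so along `γ₁` the coordinate `y` has a local maximum and along `γ₂` a local minimum, both tangent
vectors are horizontal, and they cannot be transversal. If both are odd, then
`f (t, ±t) = ±t ^ (m + n)` with `m + n` even, and the two diagonals exhibit the saddle. -/

theorem Even.zero_pow_le {R : Type*} [Ring R] [LinearOrder R] [IsStrictOrderedRing R] {k : ℕ}
    (hk : Even k) (x : R) : 0 ^ k ≤ x ^ k := by
  simpa only [abs_zero, hk.pow_abs] using pow_le_pow_left₀ le_rfl (abs_nonneg x) k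

theorem Module.Dual.exists_smul_eq_of_apply_eq_zero {K V : Type*} [Field K] [AddCommGroup V]
    [Module K V] (hV : Module.finrank K V = 2)
    {ℓ : Module.Dual K V} (hℓ : ℓ ≠ 0) {v w : V} (hv : ℓ v = 0) (hw : ℓ w = 0) (hw₀ : w ≠ 0) :
    ∃ c : K, v = c • w := by
  have : FiniteDimensional K V := Module.finite_of_finrank_pos (by omega)
  have hker : Module.finrank K (LinearMap.ker ℓ) = 1 := by
    have := Module.Dual.finrank_ker_add_one_of_ne_zero hℓ
    omega
  obtain ⟨c, hc⟩ := (finrank_eq_one_iff_of_nonzero' (⟨w, hw⟩ : LinearMap.ker ℓ)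
    fun h ↦ hw₀ (congrArg Subtype.val h)).mp hker ⟨v, hv⟩
  exact ⟨c, congrArg Subtype.val hc.symm⟩

theorem IsLocalExtr.apply_deriv_eq_zero {E : Type*} [NormedAddCommGroup E] [NormedSpace ℝ E]
    {γ : ℝ → E} {t : ℝ} (ℓ : E →L[ℝ] ℝ) (hγ : DifferentiableAt ℝ γ t)
    (h : IsLocalExtr (ℓ ∘ γ) t) : ℓ (deriv γ t) = 0 :=
  h.hasDerivAt_eq_zero (ℓ.hasFDerivAt.comp_hasDerivAt t hγ.hasDerivAt)

theorem hasDerivAt_line_s14 {E : Type*} [NormedAddCommGroup E] [NormedSpace ℝ E] (p v : E) (t : ℝ) :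
    HasDerivAt (fun s : ℝ ↦ p + s • v) v t := by
  simpa using ((hasDerivAt_id t).smul_const v).const_add p

theorem isRegularPath_line (p : ℝ × ℝ) {v : ℝ × ℝ} (hv : v ≠ 0) {a b : ℝ} (hab : a < b) :
    IsRegularPath univ (fun s ↦ p + s • v) a b :=
  ⟨hab, by fun_prop, mapsTo_univ _ _, fun t _ ↦
    ⟨(hasDerivAt_line_s14 p v t).differentiableAt, by rwa [(hasDerivAt_line_s14 p v t).deriv]⟩⟩

/-- Both tangent vectors at `p` would lie in the line `ker ℓ`. -/
theorem not_hasStrictSaddleAt_of_lt_imp_lt {D : Set (ℝ × ℝ)} {f : ℝ × ℝ → ℝ} {p : ℝ × ℝ}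
    (ℓ : ℝ × ℝ →L[ℝ] ℝ) (hℓ : ℓ ≠ 0) (hlt : ∀ q, f q < f p → ℓ q < ℓ p)
    (hgt : ∀ q, f p < f q → ℓ p < ℓ q) : ¬ HasStrictSaddleAt D f p := by
  rintro ⟨a₁, b₁, a₂, b₂, t₁, t₂, γ₁, γ₂, hγ₁, hγ₂, ht₁, ht₂, hp₁, hp₂, htr, -, hmax, hmin⟩
  have hmax' : IsStrictLocalMax (ℓ ∘ γ₁) t₁ := hmax.mono fun s hs ↦ by
    simp only [Function.comp_apply, hp₁] at hs ⊢
    exact hlt _ hs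
  have hmin' : IsStrictLocalMin (ℓ ∘ γ₂) t₂ := hmin.mono fun s hs ↦ by
    simp only [Function.comp_apply, hp₂] at hs ⊢
    exact hgt _ hs
  obtain ⟨hd₁, -⟩ := hγ₁.2.2.2 t₁ ht₁
  obtain ⟨hd₂, hne₂⟩ := hγ₂.2.2.2 t₂ ht₂
  obtain ⟨c, hc⟩ := Module.Dual.exists_smul_eq_of_apply_eq_zero (by simp)
    (ContinuousLinearMap.coe_injective.ne hℓ)
    (IsLocalExtr.apply_deriv_eq_zero ℓ hd₁ (.inr hmax'.isLocalMax))
    (IsLocalExtr.apply_deriv_eq_zero ℓ hd₂ (.inl hmin'.isLocalMin)) hne₂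
  exact htr c hc

theorem not_hasStrictSaddleAt_of_forall_le {D : Set (ℝ × ℝ)} {f : ℝ × ℝ → ℝ} {p : ℝ × ℝ}
    (h : ∀ q, f p ≤ f q) : ¬ HasStrictSaddleAt D f p := by
  rintro ⟨a₁, b₁, a₂, b₂, t₁, t₂, γ₁, γ₂, -, -, -, -, rfl, -, -, -, hmax, -⟩
  obtain ⟨s, hs⟩ := hmax.exists
  exact (h _).not_gt hs

theorem hasStrictSaddleAt_univ_of_lines {f : ℝ × ℝ → ℝ} {p v w : ℝ × ℝ}
    (hvw : ∀ c : ℝ, v ≠ c • w) (hwv : ∀ c : ℝ, w ≠ c • v)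
    (hmax : IsStrictLocalMax (fun t ↦ f (p + t • v)) 0)
    (hmin : IsStrictLocalMin (fun t ↦ f (p + t • w)) 0) : HasStrictSaddleAt univ f p := by
  have hv : v ≠ 0 := by simpa using hvw 0
  have hw : w ≠ 0 := by simpa using hwv 0
  refine ⟨-1, 1, -1, 1, 0, 0, _, _, isRegularPath_line p hv (by norm_num),
    isRegularPath_line p hw (by norm_num), by norm_num, by norm_num, by simp, by simp, ?_, ?_,
    hmax, hmin⟩ <;>
  simpa only [(hasDerivAt_line_s14 _ _ _).deriv]

theorem xm_yn_strict_saddle_iff_general (m n : ℕ) :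
    HasStrictSaddleAt Set.univ (fun q : ℝ × ℝ => q.1 ^ m * q.2 ^ n) (0, 0) ↔
      Odd m ∧ Odd n := by
  refine ⟨fun h ↦ ?_, fun ⟨hm, hn⟩ ↦ ?_⟩
  · rcases Nat.even_or_odd m with hm | hm <;> rcases Nat.even_or_odd n with hn | hn
    · refine absurd h <| not_hasStrictSaddleAt_of_forall_le fun q ↦ ?_
      exact mul_le_mul (hm.zero_pow_le _) (hn.zero_pow_le _) (by positivity) (hm.pow_nonneg _)
    · refine absurd h <| not_hasStrictSaddleAt_of_lt_imp_lt (.snd ℝ ℝ ℝ) ?_ ?_ ?_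
      · exact DFunLike.ne_iff.2 ⟨(0, 1), by simp⟩
      all_goals simp only [zero_pow hn.pos.ne', mul_zero, ContinuousLinearMap.coe_snd']
      · exact fun q hq ↦ hn.pow_neg_iff.1 (neg_of_mul_neg_right hq (hm.pow_nonneg _))
      · exact fun q hq ↦ hn.pow_pos_iff.1 (pos_of_mul_pos_right hq (hm.pow_nonneg _))
    · refine absurd h <| not_hasStrictSaddleAt_of_lt_imp_lt (.fst ℝ ℝ ℝ) ?_ ?_ ?_
      · exact DFunLike.ne_iff.2 ⟨(1, 0), by simp⟩
      all_goals simp only [zero_pow hm.pos.ne', zero_mul, ContinuousLinearMap.coe_fst']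
      · exact fun q hq ↦ hm.pow_neg_iff.1 (neg_of_mul_neg_left hq (hn.pow_nonneg _))
      · exact fun q hq ↦ hm.pow_pos_iff.1 (pos_of_mul_pos_left hq (hn.pow_nonneg _))
    · exact ⟨hm, hn⟩
  · have hmn : Even (m + n) := hm.add_odd hn
    refine hasStrictSaddleAt_univ_of_lines (v := (1, -1)) (w := (1, 1)) ?_ ?_ ?_ ?_
    · intro c hc
      simp only [Prod.ext_iff, Prod.smul_mk, smul_eq_mul, mul_one] at hc
      linarith [hc.1, hc.2]
    · intro c hc
      simp only [Prod.ext_iff, Prod.smul_mk, smul_eq_mul, mul_one, mul_neg] at hc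
      linarith [hc.1, hc.2]
    · refine eventually_nhdsWithin_of_forall fun t (ht : t ≠ 0) ↦ ?_
      simpa [zero_pow hm.pos.ne', hn.neg_pow, ← pow_add] using hmn.pow_pos ht
    · refine eventually_nhdsWithin_of_forall fun t (ht : t ≠ 0) ↦ ?_
      simpa [zero_pow hm.pos.ne', ← pow_add] using hmn.pow_pos ht

/-- For positive integers `m, n`, the function `f(x, y) = x^m y^n` has a strict saddle point
at the origin if and only if both `m` and `n` are odd. -/
theorem xm_yn_strict_saddle_iff (m n : ℕ) (hm : 0 < m) (hn : 0 < n) :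
    HasStrictSaddleAt Set.univ (fun q : ℝ × ℝ => q.1 ^ m * q.2 ^ n) (0, 0) ↔
      Odd m ∧ Odd n :=
  xm_yn_strict_saddle_iff_general m n
end

section
/- (Generalized monkey saddle) Let n be an integer with n ≥ 2 and define f : ℝ² → ℝ by f(x,y) := Re((x + iy)^n), the real part of the n-th power of the complex number x + iy. Then f has a strict saddle point at (0,0). -/
open Set Filter Topology

/-!
Along the ray `t ↦ t e^{iθ}` the function is `tⁿ cos (nθ)`, which changes sign at `t = 0` when
`n` is odd, so straight lines do not suffice. Twisting the ray into the spiral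
`t ↦ t e^{i(θ + tⁿ)}`, which still has velocity `e^{iθ}` at `t = 0`, gives
`tⁿ cos (nθ + n tⁿ)`. For `nθ = ±π/2` this is `∓ tⁿ sin (n tⁿ)`, and `u sin (n u) > 0` for small
`u ≠ 0`, so the spirals with `θ = ±π/(2n)` give a strict maximum and a strict minimum. Their
tangents `e^{±iπ/(2n)}` are transversal because `0 < π/(2n) < π/2` when `n ≥ 2`.
-/

open Real

/-- The path `t ↦ t · e^{i(θ + tⁿ)}`. -/
noncomputable def spiral (n : ℕ) (θ t : ℝ) : ℝ × ℝ :=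
  (t * cos (θ + t ^ n), t * sin (θ + t ^ n))

noncomputable def rePow (n : ℕ) (q : ℝ × ℝ) : ℝ :=
  (((q.1 : ℂ) + (q.2 : ℂ) * Complex.I) ^ n).re

section Spiral

variable (n : ℕ) (θ : ℝ)

theorem continuous_spiral : Continuous (spiral n θ) := by
  unfold spiral; fun_prop

theorem hasDerivAt_spiral (t : ℝ) :
    HasDerivAt (spiral n θ)
      (cos (θ + t ^ n) - t * (n * t ^ (n - 1)) * sin (θ + t ^ n),
       sin (θ + t ^ n) + t * (n * t ^ (n - 1)) * cos (θ + t ^ n)) t := by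
  have hφ : HasDerivAt (fun t : ℝ => θ + t ^ n) (n * t ^ (n - 1)) t := by
    simpa using (hasDerivAt_pow n t).const_add θ
  refine ((hasDerivAt_id t).mul (hasDerivAt_cos _ |>.comp t hφ)).prodMk
    ((hasDerivAt_id t).mul (hasDerivAt_sin _ |>.comp t hφ)) |>.congr_deriv ?_
  simp only [id, Function.comp_apply, Prod.mk.injEq]
  constructor <;> ring

/-- The velocity is the unit vector `e^{iφ}` plus an orthogonal vector, so it never vanishes. -/
theorem deriv_spiral_ne_zero (t : ℝ) : deriv (spiral n θ) t ≠ 0 := by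
  rw [(hasDerivAt_spiral n θ t).deriv]
  set φ := θ + t ^ n
  set w := t * (n * t ^ (n - 1))
  intro h
  obtain ⟨h₁, h₂⟩ := Prod.ext_iff.mp h
  have : (cos φ - w * sin φ) * cos φ + (sin φ + w * cos φ) * sin φ = 1 := by
    linear_combination sin_sq_add_cos_sq φ
  simp_all

theorem isRegularPath_spiral {a b : ℝ} (hab : a < b) :
    IsRegularPath univ (spiral n θ) a b :=
  ⟨hab, (continuous_spiral n θ).continuousOn, mapsTo_univ _ _,
    fun t _ => ⟨(hasDerivAt_spiral n θ t).differentiableAt, deriv_spiral_ne_zero n θ t⟩⟩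

theorem spiral_zero : spiral n θ 0 = 0 := by
  simp [spiral]

variable {n}

theorem deriv_spiral_zero (hn : n ≠ 0) : deriv (spiral n θ) 0 = (cos θ, sin θ) := by
  simp [(hasDerivAt_spiral n θ 0).deriv, hn]

theorem rePow_spiral (t : ℝ) : rePow n (spiral n θ t) = t ^ n * cos (n * (θ + t ^ n)) := by
  have : ((spiral n θ t).1 : ℂ) + (spiral n θ t).2 * Complex.I
      = t * Complex.exp ((θ + t ^ n : ℝ) * Complex.I) := by
    rw [Complex.exp_mul_I]
    push_cast [spiral]
    ring
  rw [rePow, this, mul_pow, ← Complex.exp_nat_mul, ← Complex.ofReal_pow,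
    show (n : ℂ) * ((θ + t ^ n : ℝ) * Complex.I) = (n * (θ + t ^ n) : ℝ) * Complex.I by
      push_cast; ring,
    Complex.re_ofReal_mul, Complex.exp_ofReal_mul_I_re]

end Spiral

theorem mul_sin_pos_of_abs_lt_pi {x : ℝ} (hx₀ : x ≠ 0) (hx : |x| < π) : 0 < x * sin x := by
  rcases hx₀.lt_or_gt with hneg | hpos
  · have : 0 < sin (-x) := sin_pos_of_pos_of_lt_pi (by linarith) (by linarith [neg_abs_le x])
    rw [sin_neg] at this
    nlinarith
  · exact mul_pos hpos (sin_pos_of_pos_of_lt_pi hpos (by linarith [le_abs_self x]))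

theorem eventually_pow_mul_sin_pos {n : ℕ} (hn : n ≠ 0) :
    ∀ᶠ t in 𝓝[≠] (0 : ℝ), 0 < t ^ n * sin (n * t ^ n) := by
  have hsmall : ∀ᶠ t in 𝓝 (0 : ℝ), |(n : ℝ) * t ^ n| < π := by
    have : Tendsto (fun t : ℝ => (n : ℝ) * t ^ n) (𝓝 0) (𝓝 0) := by
      simpa [hn] using ((continuous_pow n).const_mul (n : ℝ)).tendsto 0
    exact (this.abs.eventually (gt_mem_nhds (by simpa using pi_pos)))
  filter_upwards [nhdsWithin_le_nhds hsmall, self_mem_nhdsWithin] with t ht ht₀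
  have hn' : (0 : ℝ) < n := by positivity
  have := mul_sin_pos_of_abs_lt_pi (by simpa [hn] using ht₀) ht
  rw [mul_assoc] at this
  exact pos_of_mul_pos_right this hn'.le

theorem cos_sin_ne_smul_cos_sin_neg {θ : ℝ} (hcos : cos θ ≠ 0) (hsin : sin θ ≠ 0) (c : ℝ) :
    (cos θ, sin θ) ≠ c • (cos (-θ), sin (-θ)) := by
  intro h
  obtain ⟨h₁, h₂⟩ := Prod.ext_iff.mp h
  simp only [cos_neg, sin_neg, Prod.smul_mk, smul_eq_mul] at h₁ h₂
  obtain rfl : c = 1 := by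
    have : (c - 1) * cos θ = 0 := by linear_combination -h₁
    simpa [sub_eq_zero, hcos] using this
  exact hsin (by linarith)

theorem isStrictLocalMax_rePow_comp_spiral {n : ℕ} (hn : n ≠ 0) {θ : ℝ} (hθ : n * θ = π / 2) :
    IsStrictLocalMax (rePow n ∘ spiral n θ) 0 := by
  filter_upwards [eventually_pow_mul_sin_pos hn] with t ht
  simp only [Function.comp_apply, rePow_spiral, mul_add, hθ, zero_pow hn, zero_mul]
  rw [add_comm, cos_add_pi_div_two]
  linarith

theorem isStrictLocalMin_rePow_comp_spiral {n : ℕ} (hn : n ≠ 0) {θ : ℝ}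
    (hθ : n * θ = -(π / 2)) :
    IsStrictLocalMin (rePow n ∘ spiral n θ) 0 := by
  filter_upwards [eventually_pow_mul_sin_pos hn] with t ht
  simp only [Function.comp_apply, rePow_spiral, mul_add, hθ, zero_pow hn, zero_mul]
  rwa [neg_add_eq_sub, cos_sub_pi_div_two]

/-- Generalized monkey saddle: for `n ≥ 2`, the function `f(x, y) = Re((x + iy)^n)` has a
strict saddle point at the origin. -/
theorem generalized_monkey_saddle (n : ℕ) (hn : 2 ≤ n) :
    HasStrictSaddleAt Set.univ
      (fun q : ℝ × ℝ => (((q.1 : ℂ) + (q.2 : ℂ) * Complex.I) ^ n).re) (0, 0) := by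
  have hn₀ : n ≠ 0 := by omega
  set θ := π / (2 * n)
  have hθ : n * θ = π / 2 := by simp only [θ]; field_simp
  have hθ_pos : 0 < θ := by positivity
  have hθ_lt : θ < π / 2 :=
    div_lt_div_of_pos_left pi_pos two_pos (by norm_cast; omega)
  have hcos : cos θ ≠ 0 := (cos_pos_of_mem_Ioo ⟨by linarith, hθ_lt⟩).ne'
  have hsin : sin θ ≠ 0 := (sin_pos_of_pos_of_lt_pi hθ_pos (by linarith)).ne'
  have hI : (0 : ℝ) ∈ Ioo (-1) 1 := ⟨by norm_num, by norm_num⟩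
  refine ⟨-1, 1, -1, 1, 0, 0, spiral n θ, spiral n (-θ),
    isRegularPath_spiral n θ (by norm_num), isRegularPath_spiral n (-θ) (by norm_num), hI, hI,
    spiral_zero n θ, spiral_zero n (-θ), ?_, ?_,
    isStrictLocalMax_rePow_comp_spiral hn₀ hθ,
    isStrictLocalMin_rePow_comp_spiral hn₀ (by rw [mul_neg, hθ])⟩
  all_goals rw [deriv_spiral_zero _ hn₀, deriv_spiral_zero _ hn₀]
  · exact cos_sin_ne_smul_cos_sin_neg hcos hsin
  · simpa using cos_sin_ne_smul_cos_sin_neg (θ := -θ) (by simpa) (by simpa)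
end
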